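/- arXiv:2208.07095 — 6 statements merged into one kernel-verified Lean document; each statement's English description precedes it below -/
import Mathlib

section
/- Let H be a real symmetric d×d matrix and g ∈ ℝ^d a nonzero vector such that every eigenvalue of H is g-relevant. Then H is positive semidefinite if and only if ⟨z, Hz⟩ ≥ 0 for every z in the full Krylov space K(H,g) = span{H^i g : i ≥ 0}. -/
open Matrix

/-- The Krylov subspace of degree `t`: span of `g, Hg, …, H^{t-1} g`. -/
noncomputable def Krylov {d : ℕ} (H : Matrix (Fin d) (Fin d) ℝ) (g : Fin d → ℝ) (t : ℕ) :
    Submodule ℝ (Fin d → ℝ) :=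
  Submodule.span ℝ ((fun i : ℕ => (H ^ i) *ᵥ g) '' Set.Iio t)

/-- The full Krylov space: span of `{H^i g : i ≥ 0}`. -/
noncomputable def KrylovFull {d : ℕ} (H : Matrix (Fin d) (Fin d) ℝ) (g : Fin d → ℝ) :
    Submodule ℝ (Fin d → ℝ) :=
  Submodule.span ℝ (Set.range fun i : ℕ => (H ^ i) *ᵥ g)

/-- `lam` is a `g`-relevant eigenvalue of `H`: `g` is not orthogonal to `ker (H - lam I)`. -/
def gRelevant {d : ℕ} (H : Matrix (Fin d) (Fin d) ℝ) (g : Fin d → ℝ) (lam : ℝ) : Prop :=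
  ∃ v : Fin d → ℝ, H *ᵥ v = lam • v ∧ v ⬝ᵥ g ≠ 0

/-- The Euclidean norm of a vector. -/
noncomputable def vnorm {d : ℕ} (x : Fin d → ℝ) : ℝ := Real.sqrt (x ⬝ᵥ x)

/-!
If `H` is not positive semidefinite it has an eigenvalue `μ < 0`, and relevance gives a
`μ`-eigenvector `w` with `w ⬝ᵥ g ≠ 0`. Factor the characteristic polynomial as `(X - μ)^k * r`
with `r μ ≠ 0` and put `z = r(H) g ∈ K(H, g)`. Cayley–Hamilton gives `(H - μ)^k z = 0`, which for
the symmetric matrix `H - μ` already forces `H z = μ z`; by symmetry `w ⬝ᵥ z = r μ * (w ⬝ᵥ g) ≠ 0`.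
So `z` is a nonzero `μ`-eigenvector in the Krylov space and `z ⬝ᵥ H z = μ ‖z‖² < 0`.
-/

open Polynomial

section

variable {n R : Type*} [Fintype n]

theorem Matrix.IsSymm.dotProduct_mulVec_comm [CommSemiring R] {A : Matrix n n R} (hA : A.IsSymm)
    (x y : n → R) : x ⬝ᵥ (A *ᵥ y) = (A *ᵥ x) ⬝ᵥ y := by
  rw [dotProduct_mulVec, ← mulVec_transpose, hA.eq]

theorem Matrix.IsSymm.mulVec_eq_zero_of_pow_mulVec_eq_zero [CommRing R] [LinearOrder R]
    [IsStrictOrderedRing R] [DecidableEq n] {A : Matrix n n R} (hA : A.IsSymm) {k : ℕ}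
    {v : n → R} (h : (A ^ k) *ᵥ v = 0) : A *ᵥ v = 0 := by
  induction k generalizing v with
  | zero => simp_all
  | succ k ih =>
    rw [pow_succ, ← mulVec_mulVec] at h
    have hAAv : A *ᵥ (A *ᵥ v) = 0 := ih h
    rw [← dotProduct_self_eq_zero, ← hA.dotProduct_mulVec_comm, hAAv, dotProduct_zero]

theorem Matrix.aeval_mulVec_of_mulVec_eq_smul [CommSemiring R] [DecidableEq n]
    {A : Matrix n n R} {v : n → R} {μ : R} (hv : A *ᵥ v = μ • v) (p : R[X]) :
    aeval A p *ᵥ v = p.eval μ • v := by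
  induction p using Polynomial.induction_on' with
  | add p q hp hq => rw [map_add, add_mulVec, hp, hq, eval_add, add_smul]
  | monomial k a =>
    have hpow : (A ^ k) *ᵥ v = μ ^ k • v := by
      induction k with
      | zero => simp
      | succ k ih => rw [pow_succ, ← mulVec_mulVec, hv, mulVec_smul, ih, smul_smul, ← pow_succ']
    rw [aeval_monomial, Algebra.algebraMap_eq_smul_one, smul_mul_assoc, one_mul, smul_mulVec,
      hpow, eval_monomial, smul_smul]

theorem Matrix.IsSymm.aeval [CommSemiring R] [DecidableEq n] {A : Matrix n n R} (hA : A.IsSymm)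
    (p : R[X]) : (aeval A p).IsSymm := by
  induction p using Polynomial.induction_on' with
  | add p q hp hq => rw [map_add]; exact hp.add hq
  | monomial k a =>
    rw [aeval_monomial, Algebra.algebraMap_eq_smul_one, smul_mul_assoc, one_mul]
    exact (hA.pow k).smul a

open scoped ComplexOrder in
theorem Matrix.IsHermitian.exists_neg_eigenvalue_of_not_posSemidef {𝕜 : Type*} [RCLike 𝕜]
    [DecidableEq n] {A : Matrix n n 𝕜} (hA : A.IsHermitian) (h : ¬ A.PosSemidef) :
    ∃ μ : ℝ, μ < 0 ∧ ∃ v ≠ 0, A *ᵥ v = μ • v := by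
  obtain ⟨i, hi⟩ : ∃ i, hA.eigenvalues i < 0 := by
    simpa [hA.posSemidef_iff_eigenvalues_nonneg, Pi.le_def] using h
  exact ⟨_, hi, _, (WithLp.ofLp_eq_zero 2).ne.2 (hA.eigenvectorBasis.orthonormal.ne_zero i),
    hA.mulVec_eigenvectorBasis i⟩

end

theorem aeval_mulVec_mem_krylovFull {d : ℕ} (H : Matrix (Fin d) (Fin d) ℝ) (g : Fin d → ℝ)
    (p : ℝ[X]) : aeval H p *ᵥ g ∈ KrylovFull H g := by
  induction p using Polynomial.induction_on' with
  | add p q hp hq => rw [map_add, add_mulVec]; exact add_mem hp hq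
  | monomial k a =>
    rw [aeval_monomial, Algebra.algebraMap_eq_smul_one, smul_mul_assoc, one_mul, smul_mulVec]
    exact Submodule.smul_mem _ _ (Submodule.subset_span ⟨k, rfl⟩)

theorem exists_eigenvector_mem_krylovFull {d : ℕ} {H : Matrix (Fin d) (Fin d) ℝ} (hH : H.IsSymm)
    {g w : Fin d → ℝ} {μ : ℝ} (hw : H *ᵥ w = μ • w) (hwg : w ⬝ᵥ g ≠ 0) :
    ∃ z ∈ KrylovFull H g, z ≠ 0 ∧ H *ᵥ z = μ • z := by
  obtain ⟨r, hchar, hr⟩ := H.charpoly.exists_eq_pow_rootMultiplicity_mul_and_not_dvd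
    H.charpoly_monic.ne_zero μ
  rw [dvd_iff_isRoot] at hr
  set z := aeval H r *ᵥ g
  have hHμ : (H - μ • 1).IsSymm := hH.sub (isSymm_one.smul μ)
  have hker : ((H - μ • 1) ^ H.charpoly.rootMultiplicity μ) *ᵥ z = 0 := by
    have hann : aeval H H.charpoly *ᵥ g = 0 := by rw [aeval_self_charpoly, zero_mulVec]
    rwa [hchar, map_mul, ← mulVec_mulVec, map_pow, map_sub, aeval_X, aeval_C,
      Algebra.algebraMap_eq_smul_one] at hann
  have hwz : w ⬝ᵥ z = r.eval μ * (w ⬝ᵥ g) := by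
    rw [(hH.aeval r).dotProduct_mulVec_comm, aeval_mulVec_of_mulVec_eq_smul hw, smul_dotProduct,
      smul_eq_mul]
  refine ⟨z, aeval_mulVec_mem_krylovFull H g r, ?_, ?_⟩
  · intro hz
    rw [hz, dotProduct_zero] at hwz
    exact mul_ne_zero hr hwg hwz.symm
  · have hz := hHμ.mulVec_eq_zero_of_pow_mulVec_eq_zero hker
    rwa [sub_mulVec, smul_mulVec, one_mulVec, sub_eq_zero] at hz

theorem posSemidef_iff_krylov_nonneg_general {d : ℕ} (H : Matrix (Fin d) (Fin d) ℝ)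
    (hH : H.IsSymm) (g : Fin d → ℝ)
    (hrel : ∀ lam : ℝ, (∃ v : Fin d → ℝ, v ≠ 0 ∧ H *ᵥ v = lam • v) → gRelevant H g lam) :
    H.PosSemidef ↔ ∀ z ∈ KrylovFull H g, 0 ≤ z ⬝ᵥ (H *ᵥ z) := by
  refine ⟨fun hpsd z _ => by simpa using hpsd.dotProduct_mulVec_nonneg z, fun hK => ?_⟩
  by_contra hnot
  obtain ⟨μ, hμ, v, hv, hHv⟩ :=
    (isHermitian_iff_isSymm.mpr hH).exists_neg_eigenvalue_of_not_posSemidef hnot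
  obtain ⟨w, hw, hwg⟩ := hrel μ ⟨v, hv, hHv⟩
  obtain ⟨z, hzK, hz, hHz⟩ := exists_eigenvector_mem_krylovFull hH hw hwg
  have hzz : 0 < z ⬝ᵥ z := by simpa using dotProduct_self_star_pos_iff.mpr hz
  have hcurv := hK z hzK
  rw [hHz, dotProduct_smul, smul_eq_mul] at hcurv
  exact hcurv.not_gt (mul_neg_of_neg_of_pos hμ hzz)

/-- If every eigenvalue of `H` is `g`-relevant, then `H` is positive semidefinite iff the
curvature is nonnegative on the full Krylov space. -/
theorem posSemidef_iff_krylov_nonneg {d : ℕ} (H : Matrix (Fin d) (Fin d) ℝ)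
    (hH : H.IsSymm) (g : Fin d → ℝ) (hg : g ≠ 0)
    (hrel : ∀ lam : ℝ, (∃ v : Fin d → ℝ, v ≠ 0 ∧ H *ᵥ v = lam • v) → gRelevant H g lam) :
    H.PosSemidef ↔ ∀ z ∈ KrylovFull H g, 0 ≤ z ⬝ᵥ (H *ᵥ z) :=
  posSemidef_iff_krylov_nonneg_general H hH g hrel
end

section
/- Let H be a real symmetric d×d matrix, g ∈ ℝ^d a nonzero vector, and L > 0 a constant such that ‖Hz‖ ≤ L‖z‖ for every z in the full Krylov space K(H,g) = span{H^i g : i ≥ 0}. Let t ≥ 1, let s minimize ‖Hs' + g‖ over s' ∈ K_t(H,g), and set r = −g − Hs. If, for some η > 0, ‖r‖² ≤ (η²/(L² + η²))·‖g‖², then ‖Hr‖ ≤ η‖Hs‖. -/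
open Matrix

lemma dp_self_nonneg {d : ℕ} (x : Fin d → ℝ) : 0 ≤ x ⬝ᵥ x :=
  Finset.sum_nonneg fun i _ => mul_self_nonneg (x i)

lemma vnorm_le_iff {d : ℕ} {x y : Fin d → ℝ} :
    vnorm x ≤ vnorm y ↔ x ⬝ᵥ x ≤ y ⬝ᵥ y := by
  unfold vnorm
  constructor
  · intro h
    have h2 := pow_le_pow_left₀ (Real.sqrt_nonneg _) h 2
    rwa [Real.sq_sqrt (dp_self_nonneg _), Real.sq_sqrt (dp_self_nonneg _)] at h2
  · exact Real.sqrt_le_sqrt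

lemma mem_full_of_mem_full_mulVec {d : ℕ} (H : Matrix (Fin d) (Fin d) ℝ) (g : Fin d → ℝ)
    {z : Fin d → ℝ} (hz : z ∈ KrylovFull H g) : H *ᵥ z ∈ KrylovFull H g := by
  induction hz using Submodule.span_induction with
  | mem x hx =>
    obtain ⟨i, rfl⟩ := hx
    apply Submodule.subset_span
    refine ⟨i + 1, ?_⟩
    rw [Matrix.mulVec_mulVec, ← pow_succ']
  | zero => simp [Matrix.mulVec_zero, Submodule.zero_mem]
  | add x y _ _ hx hy => rw [Matrix.mulVec_add]; exact Submodule.add_mem _ hx hy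
  | smul c x _ hx => rw [Matrix.mulVec_smul]; exact Submodule.smul_mem _ _ hx


/-- If the squared residual of the degree-`t` MINRES solution is at most
`(η²/(L² + η²))·‖g‖²`, then the inexactness condition `‖H r‖ ≤ η ‖H s‖` holds. -/
theorem inexactness_condition_of_residual_bound {d : ℕ} (H : Matrix (Fin d) (Fin d) ℝ)
    (hH : H.IsSymm) (g : Fin d → ℝ) (hg : g ≠ 0)
    (L : ℝ) (hL : 0 < L)
    (hbound : ∀ z ∈ KrylovFull H g, vnorm (H *ᵥ z) ≤ L * vnorm z)
    (t : ℕ) (ht : 1 ≤ t) (s : Fin d → ℝ) (hs : s ∈ Krylov H g t)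
    (hmin : ∀ s' ∈ Krylov H g t, vnorm (H *ᵥ s + g) ≤ vnorm (H *ᵥ s' + g))
    (η : ℝ) (hη : 0 < η)
    (hr : (-g - H *ᵥ s) ⬝ᵥ (-g - H *ᵥ s) ≤ η ^ 2 / (L ^ 2 + η ^ 2) * (g ⬝ᵥ g)) :
    vnorm (H *ᵥ (-g - H *ᵥ s)) ≤ η * vnorm (H *ᵥ s) := by
  set r : Fin d → ℝ := -g - H *ᵥ s with hrdef
  set a : ℝ := (H *ᵥ s) ⬝ᵥ (H *ᵥ s) with ha
  set b : ℝ := (H *ᵥ s) ⬝ᵥ (H *ᵥ s + g) with hb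
  -- quadratic inequality from minimality
  have hq : ∀ ε : ℝ, (H *ᵥ s + g) ⬝ᵥ (H *ᵥ s + g) ≤
      (H *ᵥ s + g) ⬝ᵥ (H *ᵥ s + g) + ε * (2 * b) + ε ^ 2 * a := by
    intro ε
    have hmem : s + ε • s ∈ Krylov H g t :=
      Submodule.add_mem _ hs (Submodule.smul_mem _ _ hs)
    have h := (vnorm_le_iff).mp (hmin _ hmem)
    calc (H *ᵥ s + g) ⬝ᵥ (H *ᵥ s + g)
        ≤ (H *ᵥ (s + ε • s) + g) ⬝ᵥ (H *ᵥ (s + ε • s) + g) := h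
      _ = (H *ᵥ s + g) ⬝ᵥ (H *ᵥ s + g) + ε * (2 * b) + ε ^ 2 * a := by
          simp only [Matrix.mulVec_add, Matrix.mulVec_smul, ha, hb,
            add_dotProduct, dotProduct_add, smul_dotProduct,
            dotProduct_smul, smul_eq_mul]
          rw [dotProduct_comm g (H *ᵥ s)]
          ring
  have hanneg : 0 ≤ a := dp_self_nonneg _
  have hb0 : b = 0 := by
    have h1 := hq (-b / (a + 1))
    have ha1 : (0:ℝ) < a + 1 := by linarith
    rw [div_pow] at h1
    have h2 : 0 ≤ -b / (a + 1) * (2 * b) + (-b) ^ 2 / (a + 1) ^ 2 * a := by linarith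
    have h3 : -b / (a + 1) * (2 * b) * (a + 1) ^ 2 = -2 * b ^ 2 * (a + 1) := by
      field_simp
    have h4 : (-b) ^ 2 / (a + 1) ^ 2 * a * (a + 1) ^ 2 = b ^ 2 * a := by
      field_simp
    have h5 : 0 ≤ -2 * b ^ 2 * (a + 1) + b ^ 2 * a := by
      have h6 := mul_nonneg h2 (sq_nonneg (a + 1))
      rw [add_mul, h3, h4] at h6; linarith
    have hb2 : b ^ 2 ≤ 0 := by nlinarith
    exact (pow_eq_zero_iff two_ne_zero).mp (le_antisymm hb2 (sq_nonneg b))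
  -- orthogonality: r ⊥ Hs
  have horth : r ⬝ᵥ (H *ᵥ s) = 0 := by
    have : (H *ᵥ s) ⬝ᵥ r = -b := by
      simp only [hrdef, hb, dotProduct_sub, dotProduct_add,
        dotProduct_neg]
      ring
    rw [dotProduct_comm, this, hb0, neg_zero]
  -- Pythagoras: g⬝g = a + r⬝r
  have hpyth : g ⬝ᵥ g = a + r ⬝ᵥ r := by
    have hgeq : g = -(H *ᵥ s) - r := by simp [hrdef]; abel
    calc g ⬝ᵥ g = (-(H *ᵥ s) - r) ⬝ᵥ (-(H *ᵥ s) - r) := by rw [← hgeq]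
      _ = a + r ⬝ᵥ r := by
          simp only [sub_dotProduct, dotProduct_sub,
            neg_dotProduct, dotProduct_neg, ha]
          have h2 := horth
          rw [dotProduct_comm] at h2
          rw [h2]
          have h3 := horth
          rw [h3]
          ring
  -- r in full Krylov space
  have hKsub : Krylov H g t ≤ KrylovFull H g :=
    Submodule.span_mono (Set.image_subset_range _ _)
  have hgK : g ∈ KrylovFull H g :=
    Submodule.subset_span ⟨0, by simp⟩
  have hrK : r ∈ KrylovFull H g := by
    rw [hrdef, sub_eq_add_neg]
    exact Submodule.add_mem _ (Submodule.neg_mem _ hgK)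
      (Submodule.neg_mem _ (mem_full_of_mem_full_mulVec H g (hKsub hs)))
  -- bound on Hr
  have hHr : (H *ᵥ r) ⬝ᵥ (H *ᵥ r) ≤ L ^ 2 * (r ⬝ᵥ r) := by
    have h := hbound r hrK
    have h2 : vnorm (H *ᵥ r) ^ 2 ≤ (L * vnorm r) ^ 2 := by
      apply pow_le_pow_left₀ (Real.sqrt_nonneg _) h 2
    rw [mul_pow] at h2
    unfold vnorm at h2
    rw [Real.sq_sqrt (dp_self_nonneg _), Real.sq_sqrt (dp_self_nonneg _)] at h2
    linarith
  have hden : (0:ℝ) < L ^ 2 + η ^ 2 := by positivity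
  -- lower bound on a
  have halow : L ^ 2 / (L ^ 2 + η ^ 2) * (g ⬝ᵥ g) ≤ a := by
    have : g ⬝ᵥ g - η ^ 2 / (L ^ 2 + η ^ 2) * (g ⬝ᵥ g) ≤ a := by linarith
    have heq : g ⬝ᵥ g - η ^ 2 / (L ^ 2 + η ^ 2) * (g ⬝ᵥ g)
        = L ^ 2 / (L ^ 2 + η ^ 2) * (g ⬝ᵥ g) := by field_simp; ring
    linarith [heq ▸ this]
  -- combine
  have hfinal : (H *ᵥ r) ⬝ᵥ (H *ᵥ r) ≤ η ^ 2 * a := by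
    calc (H *ᵥ r) ⬝ᵥ (H *ᵥ r) ≤ L ^ 2 * (r ⬝ᵥ r) := hHr
      _ ≤ L ^ 2 * (η ^ 2 / (L ^ 2 + η ^ 2) * (g ⬝ᵥ g)) := by nlinarith
      _ = η ^ 2 * (L ^ 2 / (L ^ 2 + η ^ 2) * (g ⬝ᵥ g)) := by ring
      _ ≤ η ^ 2 * a := by nlinarith
  unfold vnorm
  rw [show η * Real.sqrt ((H *ᵥ s) ⬝ᵥ (H *ᵥ s)) = Real.sqrt (η ^ 2 * a) by
    rw [Real.sqrt_mul (by positivity), Real.sqrt_sq hη.le, ha]]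
  exact Real.sqrt_le_sqrt hfinal
end

section
/- Let H be a real symmetric d×d matrix and g ∈ ℝ^d a nonzero vector having at least one positive and at least one negative g-relevant eigenvalue, and let g* be the grade of g with respect to H. Let λ₁ > 0 be the largest g-relevant eigenvalue and λ_j < 0 a negative g-relevant eigenvalue; set κ_j = λ₁/(−λ_j), and let ν_j = ‖Qg‖²/‖g‖², where Q is the orthogonal projection onto the sum of the eigenspaces of H corresponding to g-relevant eigenvalues λ with λ ≤ λ_j. Define T_j = max{⌈(√(κ_j + 1)/4)·log(4(κ_j + 1)(1 − ν_j)/ν_j) + 1⌉, 1}. Then for t = min{T_j, g*}, the Krylov subspace K_t(H,g) contains a nonzero vector z with ⟨z, Hz⟩ ≤ 0. -/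
open Matrix

/-!
Write `g = ∑ cᵢ uᵢ` in an orthonormal eigenbasis `H uᵢ = μᵢ uᵢ`; the relevant eigenvalues are the
`μᵢ` with `cᵢ ≠ 0`, and all of them are `≤ λ₁`. For a polynomial `p` of degree `< t` the vector
`z = p(H) g` lies in `K_t(H, g)`, and `⟪z, Hz⟫ = ∑ μᵢ cᵢ² p(μᵢ)²`. Take `p(x) = T_n(1 - 2x/λ₁)` with
`n = T_j - 1`. Since `|p| ≤ 1` on `[0, λ₁]`, the eigenvalues above `λ_j` contribute at most
`λ₁ (1 - ν_j) ‖g‖²`. Below `λ_j`, `p ≥ p(λ_j) = T_n(1 + 2/κ_j) ≥ exp (2n / √(κ_j + 1)) / 2`, so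
these eigenvalues contribute at most `λ_j ν_j ‖g‖² p(λ_j)²`, and the choice of `T_j` makes this
negative term dominate. When `g* < T_j` the same `z` works, because `K_t = K_{g*}` for `t ≥ g*`.
-/

open Polynomial Real

namespace Matrix.IsHermitian

variable {n : Type*} [Fintype n] [DecidableEq n] {A : Matrix n n ℝ} (hA : A.IsHermitian)
include hA

lemma eigenvectorBasis_dotProduct_mulVec (i : n) (v : n → ℝ) :
    ⇑(hA.eigenvectorBasis i) ⬝ᵥ (A *ᵥ v) =
      hA.eigenvalues i * (⇑(hA.eigenvectorBasis i) ⬝ᵥ v) := by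
  rw [dotProduct_mulVec, ← mulVec_transpose, ← conjTranspose_eq_transpose_of_trivial, hA.eq,
    mulVec_eigenvectorBasis, smul_dotProduct, smul_eq_mul]

lemma eigenvectorBasis_dotProduct_aeval_mulVec (p : ℝ[X]) (i : n) (v : n → ℝ) :
    ⇑(hA.eigenvectorBasis i) ⬝ᵥ (aeval A p *ᵥ v) =
      p.eval (hA.eigenvalues i) * (⇑(hA.eigenvectorBasis i) ⬝ᵥ v) := by
  induction p using Polynomial.induction_on generalizing v with
  | C a => simp [Algebra.algebraMap_eq_smul_one, smul_mulVec]
  | add p q hp hq => simp only [map_add, add_mulVec, dotProduct_add, hp, hq, eval_add, add_mul]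
  | monomial k a ih =>
    rw [pow_succ, ← mul_assoc, map_mul, aeval_X, ← mulVec_mulVec, ih,
      hA.eigenvectorBasis_dotProduct_mulVec]
    simp only [eval_mul, eval_X]
    ring

lemma dotProduct_eq_sum_eigenvectorBasis (x y : n → ℝ) :
    x ⬝ᵥ y = ∑ i, (⇑(hA.eigenvectorBasis i) ⬝ᵥ x) * (⇑(hA.eigenvectorBasis i) ⬝ᵥ y) := by
  have := hA.eigenvectorBasis.sum_inner_mul_inner (WithLp.toLp 2 x) (WithLp.toLp 2 y)
  simp only [EuclideanSpace.inner_eq_star_dotProduct] at this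
  simpa [dotProduct_comm] using this.symm

lemma dotProduct_mulVec_self_eq_sum (v : n → ℝ) :
    v ⬝ᵥ (A *ᵥ v) = ∑ i, hA.eigenvalues i * (⇑(hA.eigenvectorBasis i) ⬝ᵥ v) ^ 2 := by
  simp only [hA.dotProduct_eq_sum_eigenvectorBasis v, hA.eigenvectorBasis_dotProduct_mulVec]
  exact Finset.sum_congr rfl fun i _ => by ring

lemma dotProduct_self_eq_sum_sq (v : n → ℝ) :
    v ⬝ᵥ v = ∑ i, (⇑(hA.eigenvectorBasis i) ⬝ᵥ v) ^ 2 := by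
  simp only [hA.dotProduct_eq_sum_eigenvectorBasis v v, sq]

lemma eigenvectorBasis_dotProduct_eq_zero_of_mulVec_eq {i : n} {v : n → ℝ} {lam : ℝ}
    (hv : A *ᵥ v = lam • v) (hi : hA.eigenvalues i ≠ lam) :
    ⇑(hA.eigenvectorBasis i) ⬝ᵥ v = 0 := by
  have h := hA.eigenvectorBasis_dotProduct_mulVec i v
  rw [hv, dotProduct_smul, smul_eq_mul] at h
  exact (mul_eq_mul_right_iff.mp h.symm).resolve_left hi

end Matrix.IsHermitian

section Krylov

variable {d : ℕ} (H : Matrix (Fin d) (Fin d) ℝ) (g : Fin d → ℝ)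

lemma krylov_mono : Monotone (Krylov H g) := fun _ _ hst =>
  Submodule.span_mono (Set.image_mono (Set.Iio_subset_Iio hst))

variable {H g}

lemma aeval_mulVec_mem_krylov {p : ℝ[X]} {t : ℕ} (hp : p.natDegree < t) :
    aeval H p *ᵥ g ∈ Krylov H g t := by
  rw [aeval_eq_sum_range' hp, sum_mulVec]
  refine Submodule.sum_mem _ fun k hk => ?_
  rw [smul_mulVec]
  exact Submodule.smul_mem _ _ (Submodule.subset_span ⟨k, Finset.mem_range.mp hk, rfl⟩)

lemma krylov_eq_of_grade_le {gstar t : ℕ}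
    (hgrade : ∀ t : ℕ, Module.finrank ℝ (Krylov H g t) = min t gstar) (h : gstar ≤ t) :
    Krylov H g gstar = Krylov H g t :=
  Submodule.eq_of_le_of_finrank_eq (krylov_mono H g h)
    (by rw [hgrade, hgrade, min_self, min_eq_right h])

lemma aeval_mulVec_mem_krylov_min {gstar T : ℕ}
    (hgrade : ∀ t : ℕ, Module.finrank ℝ (Krylov H g t) = min t gstar)
    {p : ℝ[X]} (hp : p.natDegree < T) : aeval H p *ᵥ g ∈ Krylov H g (min T gstar) := by
  rcases le_total T gstar with h | h
  · rw [min_eq_left h]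
    exact aeval_mulVec_mem_krylov hp
  · rw [min_eq_right h, krylov_eq_of_grade_le hgrade h]
    exact aeval_mulVec_mem_krylov hp

end Krylov

section Spectral

variable {d : ℕ} {H : Matrix (Fin d) (Fin d) ℝ} (hH : H.IsHermitian) (g : Fin d → ℝ)
include hH

lemma gRelevant_iff (lam : ℝ) :
    gRelevant H g lam ↔ ∃ i, hH.eigenvalues i = lam ∧ ⇑(hH.eigenvectorBasis i) ⬝ᵥ g ≠ 0 := by
  constructor
  · rintro ⟨v, hv, hvg⟩
    rw [hH.dotProduct_eq_sum_eigenvectorBasis] at hvg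
    obtain ⟨i, -, hi⟩ := Finset.exists_ne_zero_of_sum_ne_zero hvg
    refine ⟨i, ?_, right_ne_zero_of_mul hi⟩
    by_contra hne
    exact left_ne_zero_of_mul hi (hH.eigenvectorBasis_dotProduct_eq_zero_of_mulVec_eq hv hne)
  · rintro ⟨i, rfl, hi⟩
    exact ⟨_, hH.mulVec_eigenvectorBasis i, hi⟩

variable {lamj : ℝ} {W : Submodule ℝ (Fin d → ℝ)}
  (hW : W = Submodule.span ℝ
    {v : Fin d → ℝ | ∃ lam : ℝ, gRelevant H g lam ∧ lam ≤ lamj ∧ H *ᵥ v = lam • v})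
  {Q : Matrix (Fin d) (Fin d) ℝ} (hQsymm : Q.IsSymm)
  (hQrange : ∀ x : Fin d → ℝ, Q *ᵥ x ∈ W) (hQfix : ∀ x ∈ W, Q *ᵥ x = x)
include hW hQsymm hQrange hQfix

lemma eigenvectorBasis_dotProduct_projection (i : Fin d) :
    ⇑(hH.eigenvectorBasis i) ⬝ᵥ (Q *ᵥ g) =
      if hH.eigenvalues i ≤ lamj then ⇑(hH.eigenvectorBasis i) ⬝ᵥ g else 0 := by
  by_cases hrel : gRelevant H g (hH.eigenvalues i) ∧ hH.eigenvalues i ≤ lamj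
  · have hmem : ⇑(hH.eigenvectorBasis i) ∈ W :=
      hW ▸ Submodule.subset_span ⟨_, hrel.1, hrel.2, hH.mulVec_eigenvectorBasis i⟩
    rw [dotProduct_mulVec, ← mulVec_transpose, hQsymm.eq, hQfix _ hmem, if_pos hrel.2]
  have horth : ∀ w ∈ W, ⇑(hH.eigenvectorBasis i) ⬝ᵥ w = 0 := by
    intro w hw
    rw [hW] at hw
    induction hw using Submodule.span_induction with
    | mem v hv =>
      obtain ⟨lam, hlam, hle, hv⟩ := hv
      exact hH.eigenvectorBasis_dotProduct_eq_zero_of_mulVec_eq hv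
        (by rintro rfl; exact hrel ⟨hlam, hle⟩)
    | zero => exact dotProduct_zero _
    | add x y _ _ hx hy => rw [dotProduct_add, hx, hy, add_zero]
    | smul a x _ hx => rw [dotProduct_smul, hx, smul_zero]
  rw [horth _ (hQrange g)]
  split_ifs with hle
  · by_contra hne
    exact hrel ⟨(gRelevant_iff hH g _).2 ⟨i, rfl, Ne.symm hne⟩, hle⟩
  · rfl

lemma dotProduct_projection_self :
    (Q *ᵥ g) ⬝ᵥ (Q *ᵥ g) =
      ∑ i, if hH.eigenvalues i ≤ lamj then (⇑(hH.eigenvectorBasis i) ⬝ᵥ g) ^ 2 else 0 := by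
  rw [hH.dotProduct_self_eq_sum_sq]
  refine Finset.sum_congr rfl fun i _ => ?_
  rw [eigenvectorBasis_dotProduct_projection hH g hW hQsymm hQrange hQfix]
  split_ifs <;> simp

end Spectral

lemma two_mul_le_log_one_add_sub_log_one_sub {y : ℝ} (hy0 : 0 ≤ y) (hy1 : y < 1) :
    2 * y ≤ log (1 + y) - log (1 - y) := by
  have hsum := hasSum_log_sub_log_of_abs_lt_one (abs_lt.mpr ⟨by linarith, hy1⟩)
  simpa using le_hasSum hsum 0 fun k _ => by positivity

namespace Polynomial.Chebyshev

lemma eval_T_real_eq_cosh (n : ℕ) {x : ℝ} (hx : 1 ≤ x) :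
    (T ℝ n).eval x = cosh (n * arcosh x) := by
  simpa [cosh_arcosh hx] using T_real_cosh (arcosh x) n

lemma eval_T_real_le_eval_T_real (n : ℕ) {x y : ℝ} (hx : 1 ≤ x) (hxy : x ≤ y) :
    (T ℝ n).eval x ≤ (T ℝ n).eval y := by
  rw [eval_T_real_eq_cosh n hx, eval_T_real_eq_cosh n (hx.trans hxy), cosh_le_cosh,
    abs_of_nonneg (by have := arcosh_nonneg hx; positivity),
    abs_of_nonneg (by have := arcosh_nonneg (hx.trans hxy); positivity)]
  exact mul_le_mul_of_nonneg_left ((arcosh_le_arcosh (by linarith) (by linarith)).2 hxy)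
    n.cast_nonneg

lemma exp_div_two_le_eval_T_real (n : ℕ) {x : ℝ} (hx : 1 ≤ x) :
    exp (n * arcosh x) / 2 ≤ (T ℝ n).eval x := by
  rw [eval_T_real_eq_cosh n hx, cosh_eq]
  linarith [exp_pos (-(n * arcosh x))]

lemma two_div_sqrt_le_arcosh {κ : ℝ} (hκ : 0 < κ) : 2 / √(κ + 1) ≤ arcosh (1 + 2 / κ) := by
  set s := √(κ + 1)
  have hs2 : s ^ 2 = κ + 1 := sq_sqrt (by linarith)
  have hs1 : 1 < s := by nlinarith [sqrt_nonneg (κ + 1)]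
  have hsqrt : √((1 + 2 / κ) ^ 2 - 1) = 2 * s / κ := by
    rw [sqrt_eq_iff_mul_self_eq_of_pos (by positivity)]
    field_simp
    nlinarith
  have hy1 : 1 / s < 1 := by rw [div_lt_one (by linarith)]; exact hs1
  -- `exp (arcosh (1 + 2 / κ)) = (s + 1) / (s - 1)`, and `log ((1 + y) / (1 - y)) = 2 artanh y`
  have key : 1 + 2 / κ + √((1 + 2 / κ) ^ 2 - 1) = (1 + 1 / s) / (1 - 1 / s) := by
    rw [hsqrt, show κ = s ^ 2 - 1 by linarith]
    have : s - 1 ≠ 0 := by linarith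
    have : s ^ 2 - 1 ≠ 0 := by nlinarith
    field_simp
    ring
  rw [arcosh, key, log_div (by positivity) (by linarith)]
  simpa [div_eq_mul_inv] using two_mul_le_log_one_add_sub_log_one_sub (by positivity) hy1

lemma exp_div_sqrt_le_eval_T_real {κ : ℝ} (hκ : 0 < κ) (n : ℕ) :
    exp (2 * n / √(κ + 1)) / 2 ≤ (T ℝ n).eval (1 + 2 / κ) := calc
  exp (2 * n / √(κ + 1)) / 2 ≤ exp (n * arcosh (1 + 2 / κ)) / 2 := by
    rw [show 2 * (n : ℝ) / √(κ + 1) = n * (2 / √(κ + 1)) by ring]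
    gcongr
    exact two_div_sqrt_le_arcosh hκ
  _ ≤ (T ℝ n).eval (1 + 2 / κ) :=
    exp_div_two_le_eval_T_real n (le_add_of_nonneg_right (by positivity))

lemma mul_one_sub_le_mul_sq_eval_T_real {κ ν : ℝ} (hκ : 0 < κ) (hν : 0 < ν) {n : ℕ}
    (hn : √(κ + 1) / 4 * log (4 * (κ + 1) * (1 - ν) / ν) ≤ n) :
    κ * (1 - ν) ≤ ν * (T ℝ n).eval (1 + 2 / κ) ^ 2 := by
  rcases le_or_gt 1 ν with hν1 | hν1
  · nlinarith [sq_nonneg ((T ℝ n).eval (1 + 2 / κ))]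
  have hs : 0 < √(κ + 1) := sqrt_pos.2 (by linarith)
  have hR : 4 * (κ + 1) * (1 - ν) / ν ≤ exp (4 * n / √(κ + 1)) := by
    rw [← log_le_iff_le_exp (div_pos (by nlinarith) hν), le_div_iff₀ hs]
    linarith
  have hT : exp (4 * n / √(κ + 1)) / 4 ≤ (T ℝ n).eval (1 + 2 / κ) ^ 2 := calc
    exp (4 * n / √(κ + 1)) / 4 = (exp (2 * n / √(κ + 1)) / 2) ^ 2 := by
      rw [div_pow, ← exp_nat_mul]; ring_nf
    _ ≤ (T ℝ n).eval (1 + 2 / κ) ^ 2 := by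
      gcongr
      exact exp_div_sqrt_le_eval_T_real hκ n
  calc κ * (1 - ν) ≤ (κ + 1) * (1 - ν) := by nlinarith
    _ = ν * (4 * (κ + 1) * (1 - ν) / ν / 4) := by field_simp
    _ ≤ ν * (T ℝ n).eval (1 + 2 / κ) ^ 2 := by gcongr; linarith

end Polynomial.Chebyshev

noncomputable def shiftedChebyshevT (L : ℝ) (n : ℕ) : ℝ[X] :=
  (Chebyshev.T ℝ n).comp (C (-2 / L) * X + C 1)

lemma eval_shiftedChebyshevT (L : ℝ) (n : ℕ) (x : ℝ) :
    (shiftedChebyshevT L n).eval x = (Chebyshev.T ℝ n).eval (1 - 2 * x / L) := by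
  simp only [shiftedChebyshevT, eval_comp, eval_add, eval_mul, eval_C, eval_X]
  ring_nf

lemma natDegree_shiftedChebyshevT_le (L : ℝ) (n : ℕ) :
    (shiftedChebyshevT L n).natDegree ≤ n := by
  refine natDegree_comp_le.trans ?_
  rw [Chebyshev.natDegree_T, Int.natAbs_natCast]
  exact (Nat.mul_le_mul_left n natDegree_linear_le).trans_eq (mul_one n)

lemma one_le_eval_shiftedChebyshevT {L x : ℝ} (hL : 0 < L) (hx : x ≤ 0) (n : ℕ) :
    1 ≤ (shiftedChebyshevT L n).eval x := by
  rw [eval_shiftedChebyshevT]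
  have : 2 * x / L ≤ 0 := div_nonpos_of_nonpos_of_nonneg (by linarith) hL.le
  exact Chebyshev.one_le_eval_T_real n (by linarith)

lemma mul_sq_eval_shiftedChebyshevT_le {L x : ℝ} (hL : 0 < L) (hx : x ≤ L) (n : ℕ) :
    x * (shiftedChebyshevT L n).eval x ^ 2 ≤ L := by
  rcases lt_or_ge x 0 with hx0 | hx0
  · nlinarith [sq_nonneg ((shiftedChebyshevT L n).eval x)]
  have habs : |1 - 2 * x / L| ≤ 1 := by
    have h0 : 0 ≤ 2 * x / L := by positivity
    have h2 : 2 * x / L ≤ 2 := by rw [div_le_iff₀ hL]; linarith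
    exact abs_le.2 ⟨by linarith, by linarith⟩
  have hsq : (shiftedChebyshevT L n).eval x ^ 2 ≤ 1 := by
    rw [eval_shiftedChebyshevT, sq_le_one_iff_abs_le_one]
    exact Chebyshev.abs_eval_T_real_le_one n habs
  nlinarith

lemma mul_sq_eval_shiftedChebyshevT_le_of_le {L lam x : ℝ} (hL : 0 < L) (hlam : lam < 0)
    (hx : x ≤ lam) (n : ℕ) :
    x * (shiftedChebyshevT L n).eval x ^ 2 ≤ lam * (shiftedChebyshevT L n).eval lam ^ 2 := by
  have hlam1 : 1 ≤ 1 - 2 * lam / L := by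
    have : 2 * lam / L < 0 := div_neg_of_neg_of_pos (by linarith) hL
    linarith
  have hmono : (shiftedChebyshevT L n).eval lam ≤ (shiftedChebyshevT L n).eval x := by
    rw [eval_shiftedChebyshevT, eval_shiftedChebyshevT]
    exact Chebyshev.eval_T_real_le_eval_T_real n hlam1 (by gcongr)
  have hone := one_le_eval_shiftedChebyshevT hL hlam.le n
  have hsq : (shiftedChebyshevT L n).eval lam ^ 2 ≤ (shiftedChebyshevT L n).eval x ^ 2 := by
    gcongr
  nlinarith

lemma sum_mul_sq_eval_shiftedChebyshevT_nonpos {ι : Type*} [Fintype ι] {μ c : ι → ℝ}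
    {L lam : ℝ} (hL : 0 < L) (hlam : lam < 0) (hμ : ∀ i, c i ≠ 0 → μ i ≤ L) {n : ℕ}
    (hn : L * (∑ i, c i ^ 2 - ∑ i, if μ i ≤ lam then c i ^ 2 else 0) ≤
      -lam * (shiftedChebyshevT L n).eval lam ^ 2 * ∑ i, if μ i ≤ lam then c i ^ 2 else 0) :
    ∑ i, μ i * ((shiftedChebyshevT L n).eval (μ i) * c i) ^ 2 ≤ 0 := by
  set p := shiftedChebyshevT L n
  have hterm : ∀ i, μ i * (p.eval (μ i) * c i) ^ 2 ≤
      lam * p.eval lam ^ 2 * (if μ i ≤ lam then c i ^ 2 else 0) +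
        L * (c i ^ 2 - if μ i ≤ lam then c i ^ 2 else 0) := by
    intro i
    split_ifs with hle
    · nlinarith [mul_sq_eval_shiftedChebyshevT_le_of_le hL hlam hle n, sq_nonneg (c i)]
    · by_cases hc : c i = 0
      · simp [hc]
      · nlinarith [mul_sq_eval_shiftedChebyshevT_le hL (hμ i hc) n, sq_nonneg (c i)]
  calc ∑ i, μ i * (p.eval (μ i) * c i) ^ 2
      ≤ ∑ i, (lam * p.eval lam ^ 2 * (if μ i ≤ lam then c i ^ 2 else 0) +
          L * (c i ^ 2 - if μ i ≤ lam then c i ^ 2 else 0)) :=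
        Finset.sum_le_sum fun i _ => hterm i
    _ = lam * p.eval lam ^ 2 * (∑ i, if μ i ≤ lam then c i ^ 2 else 0) +
          L * (∑ i, c i ^ 2 - ∑ i, if μ i ≤ lam then c i ^ 2 else 0) := by
      rw [Finset.sum_add_distrib, ← Finset.mul_sum, ← Finset.mul_sum, Finset.sum_sub_distrib]
    _ ≤ 0 := by linarith

lemma mul_sub_le_mul_sq_eval_shiftedChebyshevT {L lam S Sj : ℝ} (hL : 0 < L) (hlam : lam < 0)
    (hSj : 0 < Sj) (hS : 0 < S) {n : ℕ}
    (hn : √(L / -lam + 1) / 4 * log (4 * (L / -lam + 1) * (1 - Sj / S) / (Sj / S)) ≤ n) :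
    L * (S - Sj) ≤ -lam * (shiftedChebyshevT L n).eval lam ^ 2 * Sj := by
  have hκ : 0 < L / -lam := div_pos hL (neg_pos.2 hlam)
  have h := Chebyshev.mul_one_sub_le_mul_sq_eval_T_real hκ (div_pos hSj hS) hn
  have hx : 1 + 2 / (L / -lam) = 1 - 2 * lam / L := by field_simp; ring
  rw [hx, ← eval_shiftedChebyshevT] at h
  have hscale : 0 ≤ -lam * S := mul_nonneg (by linarith) hS.le
  have hlam0 : lam ≠ 0 := hlam.ne
  calc L * (S - Sj) = -lam * S * (L / -lam * (1 - Sj / S)) := by field_simp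
    _ ≤ -lam * S * (Sj / S * (shiftedChebyshevT L n).eval lam ^ 2) := by gcongr
    _ = -lam * (shiftedChebyshevT L n).eval lam ^ 2 * Sj := by field_simp

lemma le_natCast_max_ceil_sub_one (A : ℝ) : A ≤ ((max ⌈A + 1⌉₊ 1 - 1 : ℕ) : ℝ) := by
  rw [Nat.cast_sub (le_max_right _ _), Nat.cast_max, Nat.cast_one]
  linarith [Nat.le_ceil (A + 1), le_max_left (⌈A + 1⌉₊ : ℝ) 1]

theorem npc_detection_complexity_general {d : ℕ} (H : Matrix (Fin d) (Fin d) ℝ)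
    (hH : H.IsSymm) (g : Fin d → ℝ)
    (gstar : ℕ)
    (hgrade : ∀ t : ℕ, Module.finrank ℝ (Krylov H g t) = min t gstar)
    (lam1 lamj : ℝ)
    (h1pos : 0 < lam1)
    (h1max : ∀ lam : ℝ, gRelevant H g lam → lam ≤ lam1)
    (hj : gRelevant H g lamj) (hjneg : lamj < 0)
    (κj : ℝ) (hκj : κj = lam1 / (-lamj))
    (W : Submodule ℝ (Fin d → ℝ))
    (hW : W = Submodule.span ℝ
      {v : Fin d → ℝ | ∃ lam : ℝ, gRelevant H g lam ∧ lam ≤ lamj ∧ H *ᵥ v = lam • v})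
    (Q : Matrix (Fin d) (Fin d) ℝ) (hQsymm : Q.IsSymm)
    (hQrange : ∀ x : Fin d → ℝ, Q *ᵥ x ∈ W)
    (hQfix : ∀ x ∈ W, Q *ᵥ x = x)
    (νj : ℝ) (hνj : νj = ((Q *ᵥ g) ⬝ᵥ (Q *ᵥ g)) / (g ⬝ᵥ g))
    (Tj : ℕ)
    (hTj : Tj = max
      ⌈Real.sqrt (κj + 1) / 4 * Real.log (4 * (κj + 1) * (1 - νj) / νj) + 1⌉₊ 1) :
    ∃ z ∈ Krylov H g (min Tj gstar), z ≠ 0 ∧ z ⬝ᵥ (H *ᵥ z) ≤ 0 := by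
  have hH' : H.IsHermitian := isHermitian_iff_isSymm.2 hH
  set c : Fin d → ℝ := fun i => ⇑(hH'.eigenvectorBasis i) ⬝ᵥ g
  set Sj := ∑ i, if hH'.eigenvalues i ≤ lamj then c i ^ 2 else 0
  set p := shiftedChebyshevT lam1 (Tj - 1)
  obtain ⟨i0, hμi0, hci0⟩ := (gRelevant_iff hH' g lamj).1 hj
  have hSj : 0 < Sj := (sq_pos_of_ne_zero hci0).trans_le <| by
    simpa [hμi0] using Finset.single_le_sum (f := fun i => if hH'.eigenvalues i ≤ lamj
      then c i ^ 2 else 0) (fun i _ => by positivity) (Finset.mem_univ i0)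
  have hSjS : Sj ≤ ∑ i, c i ^ 2 :=
    Finset.sum_le_sum fun i _ => by split_ifs <;> [exact le_rfl; positivity]
  have hν : νj = Sj / ∑ i, c i ^ 2 := by
    rw [hνj, dotProduct_projection_self hH' g hW hQsymm hQrange hQfix,
      hH'.dotProduct_self_eq_sum_sq]
  have hB := mul_sub_le_mul_sq_eval_shiftedChebyshevT h1pos hjneg hSj (hSj.trans_le hSjS)
    (n := Tj - 1) (by rw [← hκj, ← hν, hTj]; exact le_natCast_max_ceil_sub_one _)
  have hcoord (i : Fin d) :
      ⇑(hH'.eigenvectorBasis i) ⬝ᵥ (aeval H p *ᵥ g) = p.eval (hH'.eigenvalues i) * c i :=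
    hH'.eigenvectorBasis_dotProduct_aeval_mulVec p i g
  refine ⟨aeval H p *ᵥ g, aeval_mulVec_mem_krylov_min hgrade ?_, fun hz => ?_, ?_⟩
  · have : 1 ≤ Tj := hTj ▸ le_max_right _ _
    exact (natDegree_shiftedChebyshevT_le _ _).trans_lt (by omega)
  · have h0 := hcoord i0
    rw [hz, dotProduct_zero, hμi0] at h0
    have hp := one_le_eval_shiftedChebyshevT h1pos hjneg.le (Tj - 1)
    exact mul_ne_zero (by linarith) hci0 h0.symm
  · rw [hH'.dotProduct_mulVec_self_eq_sum]
    simp_rw [hcoord]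
    exact sum_mul_sq_eval_shiftedChebyshevT_nonpos h1pos hjneg
      (fun i hi => h1max _ ((gRelevant_iff hH' g _).2 ⟨i, rfl, hi⟩)) hB

/-- Complexity of detecting a nonpositive-curvature direction: the Krylov subspace of
degree `min T_j g*` contains a nonzero direction of nonpositive curvature. -/
theorem npc_detection_complexity {d : ℕ} (H : Matrix (Fin d) (Fin d) ℝ)
    (hH : H.IsSymm) (g : Fin d → ℝ) (hg : g ≠ 0)
    (gstar : ℕ) (hgstar : 0 < gstar)
    (hgrade : ∀ t : ℕ, Module.finrank ℝ (Krylov H g t) = min t gstar)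
    (lam1 lamj : ℝ)
    (h1 : gRelevant H g lam1) (h1pos : 0 < lam1)
    (h1max : ∀ lam : ℝ, gRelevant H g lam → lam ≤ lam1)
    (hj : gRelevant H g lamj) (hjneg : lamj < 0)
    (κj : ℝ) (hκj : κj = lam1 / (-lamj))
    (W : Submodule ℝ (Fin d → ℝ))
    (hW : W = Submodule.span ℝ
      {v : Fin d → ℝ | ∃ lam : ℝ, gRelevant H g lam ∧ lam ≤ lamj ∧ H *ᵥ v = lam • v})
    (Q : Matrix (Fin d) (Fin d) ℝ) (hQsymm : Q.IsSymm)
    (hQrange : ∀ x : Fin d → ℝ, Q *ᵥ x ∈ W)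
    (hQfix : ∀ x ∈ W, Q *ᵥ x = x)
    (νj : ℝ) (hνj : νj = ((Q *ᵥ g) ⬝ᵥ (Q *ᵥ g)) / (g ⬝ᵥ g))
    (Tj : ℕ)
    (hTj : Tj = max
      ⌈Real.sqrt (κj + 1) / 4 * Real.log (4 * (κj + 1) * (1 - νj) / νj) + 1⌉₊ 1) :
    ∃ z ∈ Krylov H g (min Tj gstar), z ≠ 0 ∧ z ⬝ᵥ (H *ᵥ z) ≤ 0 :=
  npc_detection_complexity_general H hH g gstar hgrade lam1 lamj h1pos h1max hj hjneg κj hκj W hW Q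
    hQsymm hQrange hQfix νj hνj Tj hTj
end

section
/- Let f : ℝ^d → ℝ be twice continuously differentiable with L_H-Lipschitz continuous Hessian. Let x ∈ ℝ^d, g = ∇f(x), H = ∇²f(x), and let s ∈ ℝ^d with residual r = −g − Hs. Suppose for constants σ > 0, L_g > 0, θ > 0 and 0 < ε ≤ 1 that: ⟨r, Hr⟩ ≥ σ‖r‖², ‖Hs‖ ≤ L_g‖s‖, and ‖Hr‖ ≤ θ√ε·‖Hs‖. Then ‖s‖ ≥ (2σ/(θL_g + √(θ²L_g² + 2σ²L_H)))·√ε·min{‖∇f(x + s)‖/ε, 1}. -/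
open scoped RealInnerProductSpace

/-- The Hessian of `f : ℝ^d → ℝ` at `x`, as the derivative of the gradient. -/
noncomputable def hessian {d : ℕ} (f : EuclideanSpace ℝ (Fin d) → ℝ)
    (x : EuclideanSpace ℝ (Fin d)) :
    EuclideanSpace ℝ (Fin d) →L[ℝ] EuclideanSpace ℝ (Fin d) :=
  fderiv ℝ (gradient f) x

/-!
Taylor's theorem with a Lipschitz Hessian gives `‖∇f(x+s)‖ ≤ ‖r‖ + (L_H/2)‖s‖²`, and the
curvature and Hessian bounds give `σ‖r‖ ≤ θ L_g √ε ‖s‖`. Hence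
`σ‖∇f(x+s)‖ ≤ θ L_g √ε ‖s‖ + σ (L_H/2) ‖s‖²`. The constant `c` of the theorem is the positive
root of `σ (L_H/2) c² + θ L_g c = σ`, so if `‖s‖ < c√ε` this quadratic bound collapses to
`c ‖∇f(x+s)‖ ≤ √ε ‖s‖`.
-/

theorem norm_image_add_sub_sub_fderiv_le {E F : Type*} [NormedAddCommGroup E] [NormedSpace ℝ E]
    [NormedAddCommGroup F] [NormedSpace ℝ F] {g : E → F} {g' : E → E →L[ℝ] F} {L : ℝ}
    (hg : ∀ y, HasFDerivAt g (g' y) y) (hL : ∀ y z, ‖g' y - g' z‖ ≤ L * ‖y - z‖) (x s : E) :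
    ‖g (x + s) - g x - g' x s‖ ≤ L / 2 * ‖s‖ ^ 2 := by
  set φ : ℝ → F := fun t => g (x + t • s) - g x - t • g' x s
  have hφ : ∀ t : ℝ, HasDerivAt φ (g' (x + t • s) s - g' x s) t := by
    intro t
    have hline : HasDerivAt (fun t : ℝ => x + t • s) s t := by
      simpa using ((hasDerivAt_id t).smul_const s).const_add x
    have hlin : HasDerivAt (fun t : ℝ => t • g' x s) (g' x s) t := by
      simpa using (hasDerivAt_id t).smul_const (g' x s)
    exact (((hg _).comp_hasDerivAt t hline).sub_const (g x)).sub hlin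
  have hbound : ∀ t ∈ Set.Ico (0 : ℝ) 1, ‖g' (x + t • s) s - g' x s‖ ≤ L * ‖s‖ ^ 2 * t := by
    rintro t ⟨ht, -⟩
    calc ‖g' (x + t • s) s - g' x s‖ = ‖(g' (x + t • s) - g' x) s‖ := rfl
      _ ≤ ‖g' (x + t • s) - g' x‖ * ‖s‖ := ContinuousLinearMap.le_opNorm _ _
      _ ≤ L * ‖x + t • s - x‖ * ‖s‖ := by gcongr; exact hL _ _
      _ = L * ‖s‖ ^ 2 * t := by
        rw [add_sub_cancel_left, norm_smul, Real.norm_eq_abs, abs_of_nonneg ht]; ring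
  have hquad : ∀ t : ℝ, HasDerivAt (fun t : ℝ => L * ‖s‖ ^ 2 / 2 * t ^ 2) (L * ‖s‖ ^ 2 * t) t :=
    fun t => ((hasDerivAt_pow 2 t).const_mul (L * ‖s‖ ^ 2 / 2)).congr_deriv (by ring)
  have h := image_norm_le_of_norm_deriv_right_le_deriv_boundary
    (fun t _ => (hφ t).continuousAt.continuousWithinAt) (fun t _ => (hφ t).hasDerivWithinAt)
    (by simp [φ]) hquad hbound (Set.right_mem_Icc.2 zero_le_one)
  simpa [φ, mul_comm, mul_left_comm, mul_assoc, div_eq_mul_inv] using h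

theorem ContDiff.differentiable_gradient {F : Type*} [NormedAddCommGroup F]
    [InnerProductSpace ℝ F] [CompleteSpace F] {f : F → ℝ} (hf : ContDiff ℝ 2 f) :
    Differentiable ℝ (gradient f) :=
  (InnerProductSpace.toDual ℝ F).symm.toContinuousLinearEquiv.differentiable.comp
    ((hf.fderiv_right (m := 1) (by norm_num)).differentiable (by norm_num))

theorem mul_norm_le_norm_of_mul_sq_le_inner {E : Type*} [NormedAddCommGroup E]
    [InnerProductSpace ℝ E] {σ : ℝ} {r v : E} (h : σ * ‖r‖ ^ 2 ≤ ⟪r, v⟫) : σ * ‖r‖ ≤ ‖v‖ := by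
  rcases (norm_nonneg r).eq_or_lt with hr | hr
  · rw [← hr, mul_zero]; exact norm_nonneg v
  · have : σ * ‖r‖ * ‖r‖ ≤ ‖v‖ * ‖r‖ := by
      nlinarith [real_inner_le_norm r v]
    exact le_of_mul_le_mul_right this hr

theorem two_mul_div_add_sqrt_root {σ A L : ℝ} (hL : 0 ≤ L)
    (hpos : 0 < A + √(A ^ 2 + 2 * σ ^ 2 * L)) :
    2 * σ / (A + √(A ^ 2 + 2 * σ ^ 2 * L)) * A
      + σ * L / 2 * (2 * σ / (A + √(A ^ 2 + 2 * σ ^ 2 * L))) ^ 2 = σ := by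
  have hsq := Real.sq_sqrt (by positivity : 0 ≤ A ^ 2 + 2 * σ ^ 2 * L)
  field_simp
  linear_combination (-σ) * hsq

theorem mul_sqrt_mul_min_le_of_le_quadratic {σ A L c ε t G : ℝ} (hσ : 0 < σ) (hL : 0 ≤ L)
    (hc : 0 ≤ c) (hroot : c * A + σ * L / 2 * c ^ 2 = σ) (hε : 0 < ε) (ht : 0 ≤ t)
    (hG : σ * G ≤ A * √ε * t + σ * L / 2 * t ^ 2) :
    c * √ε * min (G / ε) 1 ≤ t := by
  have hsqrt : 0 < √ε := Real.sqrt_pos.2 hε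
  rcases le_or_gt (c * √ε) t with hlarge | hsmall
  · calc c * √ε * min (G / ε) 1 ≤ c * √ε * 1 := by gcongr; exact min_le_right _ _
      _ ≤ t := by rwa [mul_one]
  · have hcG : σ * (c * G) ≤ σ * (√ε * t) := by
      have htt : σ * L / 2 * t ^ 2 ≤ σ * L / 2 * (c * √ε * t) := by
        rw [sq]; gcongr
      have := mul_le_mul_of_nonneg_left (hG.trans (add_le_add_right htt _)) hc
      linear_combination this + (√ε * t) * hroot
    have hcG' := le_of_mul_le_mul_left hcG hσ
    calc c * √ε * min (G / ε) 1 ≤ c * √ε * (G / ε) := by gcongr; exact min_le_left _ _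
      _ = c * G / √ε := by
        field_simp; rw [Real.sq_sqrt hε.le]; ring
      _ ≤ t := by rw [div_le_iff₀ hsqrt]; linarith

theorem step_size_lower_bound_general {d : ℕ} (f : EuclideanSpace ℝ (Fin d) → ℝ)
    (LH σ Lg θ ε : ℝ) (hLH : 0 < LH) (hσ : 0 < σ) (hθ : 0 < θ)
    (hε0 : 0 < ε)
    (hf : ContDiff ℝ 2 f)
    (hLip : ∀ x y : EuclideanSpace ℝ (Fin d), ‖hessian f x - hessian f y‖ ≤ LH * ‖x - y‖)
    (x s r : EuclideanSpace ℝ (Fin d))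
    (hrdef : r = -gradient f x - hessian f x s)
    (h1 : σ * ‖r‖ ^ 2 ≤ ⟪r, hessian f x r⟫)
    (h2 : ‖hessian f x s‖ ≤ Lg * ‖s‖)
    (h3 : ‖hessian f x r‖ ≤ θ * Real.sqrt ε * ‖hessian f x s‖) :
    2 * σ / (θ * Lg + Real.sqrt (θ ^ 2 * Lg ^ 2 + 2 * σ ^ 2 * LH)) * Real.sqrt ε *
      min (‖gradient f (x + s)‖ / ε) 1 ≤ ‖s‖ := by
  have htaylor : ‖gradient f (x + s) - gradient f x - hessian f x s‖ ≤ LH / 2 * ‖s‖ ^ 2 :=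
    norm_image_add_sub_sub_fderiv_le (fun y => (hf.differentiable_gradient y).hasFDerivAt)
      hLip x s
  have hresidual : σ * ‖r‖ ≤ θ * Lg * √ε * ‖s‖ :=
    calc σ * ‖r‖ ≤ ‖hessian f x r‖ := mul_norm_le_norm_of_mul_sq_le_inner h1
      _ ≤ θ * √ε * (Lg * ‖s‖) := h3.trans (by gcongr)
      _ = θ * Lg * √ε * ‖s‖ := by ring
  have hgrad : ‖gradient f (x + s)‖ ≤ ‖r‖ + LH / 2 * ‖s‖ ^ 2 :=
    calc ‖gradient f (x + s)‖
        = ‖-r + (gradient f (x + s) - gradient f x - hessian f x s)‖ := by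
          rw [hrdef]; congr 1; abel
      _ ≤ ‖r‖ + LH / 2 * ‖s‖ ^ 2 := (norm_add_le _ _).trans (by rw [norm_neg]; gcongr)
  have hpos : 0 < θ * Lg + √((θ * Lg) ^ 2 + 2 * σ ^ 2 * LH) := by
    have : -(θ * Lg) < √((θ * Lg) ^ 2 + 2 * σ ^ 2 * LH) :=
      Real.lt_sqrt_of_sq_lt (by rw [neg_sq]; linarith [mul_pos (pow_pos hσ 2) hLH])
    linarith
  have hroot := two_mul_div_add_sqrt_root hLH.le hpos
  rw [mul_pow] at hpos hroot
  exact mul_sqrt_mul_min_le_of_le_quadratic hσ hLH.le (div_pos (mul_pos two_pos hσ) hpos).le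
    hroot hε0 (norm_nonneg s) (by linarith [mul_le_mul_of_nonneg_left hgrad hσ.le])

/-- A lower bound on the size of an inexact Newton-MR update direction in terms of the
gradient at the updated point. -/
theorem step_size_lower_bound {d : ℕ} (f : EuclideanSpace ℝ (Fin d) → ℝ)
    (LH σ Lg θ ε : ℝ) (hLH : 0 < LH) (hσ : 0 < σ) (hLg : 0 < Lg) (hθ : 0 < θ)
    (hε0 : 0 < ε) (hε1 : ε ≤ 1)
    (hf : ContDiff ℝ 2 f)
    (hLip : ∀ x y : EuclideanSpace ℝ (Fin d), ‖hessian f x - hessian f y‖ ≤ LH * ‖x - y‖)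
    (x s r : EuclideanSpace ℝ (Fin d))
    (hrdef : r = -gradient f x - hessian f x s)
    (h1 : σ * ‖r‖ ^ 2 ≤ ⟪r, hessian f x r⟫)
    (h2 : ‖hessian f x s‖ ≤ Lg * ‖s‖)
    (h3 : ‖hessian f x r‖ ≤ θ * Real.sqrt ε * ‖hessian f x s‖) :
    2 * σ / (θ * Lg + Real.sqrt (θ ^ 2 * Lg ^ 2 + 2 * σ ^ 2 * LH)) * Real.sqrt ε *
      min (‖gradient f (x + s)‖ / ε) 1 ≤ ‖s‖ :=
  step_size_lower_bound_general f LH σ Lg θ ε hLH hσ hθ hε0 hf hLip x s r hrdef h1 h2 h3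
end

section
/- Let f : ℝ^d → ℝ be twice continuously differentiable with L_H-Lipschitz continuous Hessian. Let x ∈ ℝ^d, g = ∇f(x), H = ∇²f(x), and suppose d ∈ ℝ^d is nonzero and satisfies ⟨d, g⟩ + ⟨d, Hd⟩ ≤ 0 and ⟨d, Hd⟩ ≥ σ‖d‖² for some σ > 0. Let 0 < ρ < 1/2. Then: (a) every step-size α with 0 < α ≤ min{1, √(3σ(1 − 2ρ)/(L_H‖d‖))} satisfies the Armijo condition f(x + αd) ≤ f(x) + ρα⟨g, d⟩; and (b) with α* = min{1, √(3σ(1 − 2ρ)/(L_H‖d‖))}, one has f(x + α*d) ≤ f(x) − ρσ·min{(3σ(1 − 2ρ)/L_H)², ‖d‖²}. -/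
open scoped RealInnerProductSpace

/-!
Along the ray `φ(s) = f (x + s • v)` the Lipschitz Hessian gives
`φ''(s) ≤ φ''(0) + L_H ‖v‖³ s`, and integrating twice (by the comparison principle for
derivatives) yields the cubic model
`f (x + α v) ≤ f x + α ⟪g, v⟫ + α²/2 ⟪v, H v⟫ + L_H ‖v‖³ α³ / 6`.
With `⟪g, v⟫ ≤ -⟪v, H v⟫`, `α ≤ 1` and `⟪v, H v⟫ ≥ σ ‖v‖²`, the model lies below the Armijo
line once its cubic term is absorbed by `(1/2 - ρ) α σ ‖v‖²`, i.e. once `L_H ‖v‖ α² ≤ 3σ(1 - 2ρ)`.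
For `α* = min 1 √t` with `t = 3σ(1 - 2ρ) / (L_H ‖v‖)`, Armijo gives the decrease
`ρ α* σ ‖v‖²`, and `α* ‖v‖² ≥ min ((t ‖v‖)², ‖v‖²)` because `min (t², 1) ≤ min (1, √t)`.
-/

lemma le_of_hasDerivAt_le_of_nonneg {u w u' w' : ℝ → ℝ}
    (hu : ∀ s, HasDerivAt u (u' s) s) (hw : ∀ s, HasDerivAt w (w' s) s)
    (h₀ : u 0 ≤ w 0) (hderiv : ∀ s, 0 ≤ s → u' s ≤ w' s) {a : ℝ} (ha : 0 ≤ a) :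
    u a ≤ w a :=
  image_le_of_deriv_right_le_deriv_boundary
    (fun s _ => (hu s).continuousAt.continuousWithinAt) (fun s _ => (hu s).hasDerivWithinAt) h₀
    (fun s _ => (hw s).continuousAt.continuousWithinAt) (fun s _ => (hw s).hasDerivWithinAt)
    (fun s hs => hderiv s hs.1) ⟨ha, le_rfl⟩

theorem le_cubic_of_hasDerivAt {φ φ' φ'' : ℝ → ℝ} {C : ℝ}
    (hφ : ∀ s, HasDerivAt φ (φ' s) s) (hφ' : ∀ s, HasDerivAt φ' (φ'' s) s)
    (hφ'' : ∀ s, 0 ≤ s → φ'' s ≤ φ'' 0 + C * s) {a : ℝ} (ha : 0 ≤ a) :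
    φ a ≤ φ 0 + a * φ' 0 + a ^ 2 / 2 * φ'' 0 + C * a ^ 3 / 6 := by
  have hquad (s : ℝ) :
      HasDerivAt (fun s => φ' 0 + s * φ'' 0 + C * s ^ 2 / 2) (φ'' 0 + C * s) s :=
    ((((hasDerivAt_id' s).mul_const _).const_add _).add
      (((hasDerivAt_pow 2 s).const_mul C).div_const 2)).congr_deriv (by ring)
  have hcubic (s : ℝ) :
      HasDerivAt (fun s => φ 0 + s * φ' 0 + s ^ 2 / 2 * φ'' 0 + C * s ^ 3 / 6)
        (φ' 0 + s * φ'' 0 + C * s ^ 2 / 2) s :=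
    (((((hasDerivAt_id' s).mul_const _).const_add _).add
      (((hasDerivAt_pow 2 s).div_const 2).mul_const _)).add
      (((hasDerivAt_pow 3 s).const_mul C).div_const 6)).congr_deriv (by ring)
  have hφ'_le (s : ℝ) (hs : 0 ≤ s) : φ' s ≤ φ' 0 + s * φ'' 0 + C * s ^ 2 / 2 :=
    le_of_hasDerivAt_le_of_nonneg hφ' hquad (by simp) hφ'' hs
  simpa using le_of_hasDerivAt_le_of_nonneg hφ hcubic (by simp) hφ'_le ha

lemma cubic_model_le_armijo {G Q C n σ ρ α : ℝ} (hdesc : G + Q ≤ 0) (hcurv : σ * n ^ 2 ≤ Q)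
    (hσ : 0 ≤ σ) (hρ : ρ ≤ 1 / 2) (hα₀ : 0 ≤ α) (hα₁ : α ≤ 1)
    (hstep : C * α ^ 2 ≤ 3 * σ * (1 - 2 * ρ) * n ^ 2) :
    α * G + α ^ 2 / 2 * Q + C * α ^ 3 / 6 ≤ ρ * α * G := by
  have hQ : 0 ≤ Q := (by positivity : 0 ≤ σ * n ^ 2).trans hcurv
  have h₁ : (1 - ρ) * α * G ≤ (1 - ρ) * α * (-Q) :=
    mul_le_mul_of_nonneg_left (by linarith) (mul_nonneg (by linarith) hα₀)
  have h₂ : α ^ 2 / 2 * Q ≤ α / 2 * Q := by gcongr; nlinarith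
  have h₃ : α * (1 / 2 - ρ) * (σ * n ^ 2) ≤ α * (1 / 2 - ρ) * Q := by gcongr
  have h₄ : C * α ^ 3 / 6 ≤ α * (1 / 2 - ρ) * (σ * n ^ 2) := by nlinarith
  linarith

lemma min_sq_one_le_min_one_sqrt {t : ℝ} (ht : 0 ≤ t) :
    min (t ^ 2) 1 ≤ min 1 (Real.sqrt t) := by
  refine le_min (min_le_right _ _) ?_
  rcases le_total t 1 with h | h
  · refine (min_le_left _ _).trans (Real.le_sqrt_of_sq_le ?_)
    rw [← pow_mul]
    exact pow_le_of_le_one ht h (by norm_num)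
  · exact (min_le_right _ _).trans (Real.one_le_sqrt.mpr h)

section InnerProductSpace

variable {E : Type*} [NormedAddCommGroup E] [InnerProductSpace ℝ E]

lemma hasDerivAt_line (x v : E) (s : ℝ) : HasDerivAt (fun t : ℝ => x + t • v) v s := by
  simpa using ((hasDerivAt_id s).smul_const v).const_add x

lemma inner_apply_self_sub_le (A B : E →L[ℝ] E) (v : E) :
    ⟪v, A v⟫ - ⟪v, B v⟫ ≤ ‖A - B‖ * ‖v‖ ^ 2 :=
  calc ⟪v, A v⟫ - ⟪v, B v⟫ = ⟪v, (A - B) v⟫ := by rw [sub_apply, inner_sub_right]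
    _ ≤ ‖v‖ * ‖(A - B) v‖ := real_inner_le_norm _ _
    _ ≤ ‖v‖ * (‖A - B‖ * ‖v‖) := by gcongr; exact (A - B).le_opNorm v
    _ = ‖A - B‖ * ‖v‖ ^ 2 := by ring

variable [CompleteSpace E]

lemma ContDiff.differentiable_gradient_s14 {f : E → ℝ} (hf : ContDiff ℝ 2 f) :
    Differentiable ℝ (gradient f) :=
  (InnerProductSpace.toDual ℝ E).symm.differentiable.comp
    ((hf.fderiv_right (m := 1) le_rfl).differentiable one_ne_zero)

lemma hasDerivAt_comp_line {f : E → ℝ} {x v : E} {s : ℝ}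
    (hf : DifferentiableAt ℝ f (x + s • v)) :
    HasDerivAt (fun t : ℝ => f (x + t • v)) ⟪gradient f (x + s • v), v⟫ s := by
  rw [inner_gradient_left]
  exact hf.hasFDerivAt.comp_hasDerivAt s (hasDerivAt_line x v s)

lemma hasDerivAt_inner_gradient_comp_line {f : E → ℝ} {x v : E} {s : ℝ}
    (hf : DifferentiableAt ℝ (gradient f) (x + s • v)) :
    HasDerivAt (fun t : ℝ => ⟪gradient f (x + t • v), v⟫)
      ⟪v, fderiv ℝ (gradient f) (x + s • v) v⟫ s := by
  simpa [real_inner_comm] using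
    (hf.hasFDerivAt.comp_hasDerivAt s (hasDerivAt_line x v s)).inner ℝ (hasDerivAt_const s v)

theorem le_cubic_model_of_lipschitz_hessian {f : E → ℝ} (hf : Differentiable ℝ f)
    (hg : Differentiable ℝ (gradient f)) {LH : ℝ} {x : E}
    (hLip : ∀ y, ‖fderiv ℝ (gradient f) y - fderiv ℝ (gradient f) x‖ ≤ LH * ‖y - x‖)
    (v : E) {a : ℝ} (ha : 0 ≤ a) :
    f (x + a • v) ≤ f x + a * ⟪gradient f x, v⟫ + a ^ 2 / 2 * ⟪v, fderiv ℝ (gradient f) x v⟫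
      + LH * ‖v‖ ^ 3 * a ^ 3 / 6 := by
  have hgrowth (s : ℝ) (hs : 0 ≤ s) : ⟪v, fderiv ℝ (gradient f) (x + s • v) v⟫
      ≤ ⟪v, fderiv ℝ (gradient f) (x + (0 : ℝ) • v) v⟫ + LH * ‖v‖ ^ 3 * s := by
    have hdist : ‖x + s • v - x‖ = s * ‖v‖ := by
      rw [add_sub_cancel_left, norm_smul, Real.norm_of_nonneg hs]
    rw [zero_smul, add_zero]
    calc ⟪v, fderiv ℝ (gradient f) (x + s • v) v⟫
        ≤ ⟪v, fderiv ℝ (gradient f) x v⟫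
          + ‖fderiv ℝ (gradient f) (x + s • v) - fderiv ℝ (gradient f) x‖ * ‖v‖ ^ 2 := by
          linarith [inner_apply_self_sub_le (fderiv ℝ (gradient f) (x + s • v))
            (fderiv ℝ (gradient f) x) v]
      _ ≤ ⟪v, fderiv ℝ (gradient f) x v⟫ + LH * (s * ‖v‖) * ‖v‖ ^ 2 := by
          rw [← hdist]; gcongr; exact hLip _
      _ = ⟪v, fderiv ℝ (gradient f) x v⟫ + LH * ‖v‖ ^ 3 * s := by ring
  simpa using le_cubic_of_hasDerivAt (fun s => hasDerivAt_comp_line (hf _))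
    (fun s => hasDerivAt_inner_gradient_comp_line (hg _)) hgrowth ha

theorem armijo_of_lipschitz_hessian {f : E → ℝ} (hf : Differentiable ℝ f)
    (hg : Differentiable ℝ (gradient f)) {LH σ ρ : ℝ} (hLH : 0 < LH) (hσ : 0 ≤ σ)
    (hρ : ρ ≤ 1 / 2) {x v : E}
    (hLip : ∀ y, ‖fderiv ℝ (gradient f) y - fderiv ℝ (gradient f) x‖ ≤ LH * ‖y - x‖)
    (hv : v ≠ 0) (hdesc : ⟪v, gradient f x⟫ + ⟪v, fderiv ℝ (gradient f) x v⟫ ≤ 0)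
    (hcurv : σ * ‖v‖ ^ 2 ≤ ⟪v, fderiv ℝ (gradient f) x v⟫) {α : ℝ} (hα₀ : 0 ≤ α)
    (hα : α ≤ min 1 (Real.sqrt (3 * σ * (1 - 2 * ρ) / (LH * ‖v‖)))) :
    f (x + α • v) ≤ f x + ρ * α * ⟪gradient f x, v⟫ := by
  have hLHv : 0 < LH * ‖v‖ := mul_pos hLH (norm_pos_iff.mpr hv)
  have hα₂ : α ^ 2 * (LH * ‖v‖) ≤ 3 * σ * (1 - 2 * ρ) :=
    (le_div_iff₀ hLHv).mp ((Real.le_sqrt hα₀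
      (div_nonneg (mul_nonneg (by positivity) (by linarith)) hLHv.le)).mp
        (hα.trans (min_le_right _ _)))
  have hstep : LH * ‖v‖ ^ 3 * α ^ 2 ≤ 3 * σ * (1 - 2 * ρ) * ‖v‖ ^ 2 := by
    nlinarith [sq_nonneg ‖v‖]
  rw [real_inner_comm] at hdesc
  linarith [le_cubic_model_of_lipschitz_hessian hf hg hLip v hα₀,
    cubic_model_le_armijo hdesc hcurv hσ hρ hα₀ (hα.trans (min_le_left _ _)) hstep]

end InnerProductSpace

/-- Armijo line-search guarantee and worst-case decrease for a direction obtained before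
the detection of nonpositive curvature. -/
theorem sol_direction_decrease {d : ℕ} (f : EuclideanSpace ℝ (Fin d) → ℝ)
    (LH σ ρ : ℝ) (hLH : 0 < LH) (hσ : 0 < σ) (hρ0 : 0 < ρ) (hρ1 : ρ < 1 / 2)
    (hf : ContDiff ℝ 2 f)
    (hLip : ∀ x y : EuclideanSpace ℝ (Fin d), ‖hessian f x - hessian f y‖ ≤ LH * ‖x - y‖)
    (x v : EuclideanSpace ℝ (Fin d)) (hv : v ≠ 0)
    (hdesc : ⟪v, gradient f x⟫ + ⟪v, hessian f x v⟫ ≤ 0)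
    (hcurv : σ * ‖v‖ ^ 2 ≤ ⟪v, hessian f x v⟫) :
    (∀ α : ℝ, 0 < α → α ≤ min 1 (Real.sqrt (3 * σ * (1 - 2 * ρ) / (LH * ‖v‖))) →
      f (x + α • v) ≤ f x + ρ * α * ⟪gradient f x, v⟫) ∧
    f (x + min 1 (Real.sqrt (3 * σ * (1 - 2 * ρ) / (LH * ‖v‖))) • v) ≤
      f x - ρ * σ * min ((3 * σ * (1 - 2 * ρ) / LH) ^ 2) (‖v‖ ^ 2) := by
  have armijo (α : ℝ) (hα₀ : 0 ≤ α) := armijo_of_lipschitz_hessian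
    (hf.differentiable two_ne_zero) hf.differentiable_gradient_s14 hLH hσ.le hρ1.le
    (fun y => hLip y x) hv hdesc hcurv hα₀
  refine ⟨fun α hα₀ => armijo α hα₀.le, ?_⟩
  set t := 3 * σ * (1 - 2 * ρ) / (LH * ‖v‖) with ht_def
  have ht : 0 < t :=
    div_pos (mul_pos (by positivity) (by linarith)) (mul_pos hLH (norm_pos_iff.mpr hv))
  have hct : 3 * σ * (1 - 2 * ρ) / LH = t * ‖v‖ := by
    rw [ht_def]; field_simp [norm_ne_zero_iff.mpr hv]
  have hmin : min ((t * ‖v‖) ^ 2) (‖v‖ ^ 2) ≤ min 1 (Real.sqrt t) * ‖v‖ ^ 2 :=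
    calc _ = min (t ^ 2) 1 * ‖v‖ ^ 2 := by
          rw [min_mul_of_nonneg _ _ (sq_nonneg _), mul_pow, one_mul]
      _ ≤ _ := mul_le_mul_of_nonneg_right (min_sq_one_le_min_one_sqrt ht.le) (sq_nonneg _)
  rw [real_inner_comm] at hdesc
  calc _ ≤ f x + ρ * min 1 (Real.sqrt t) * ⟪gradient f x, v⟫ := armijo _ (by positivity) le_rfl
    _ ≤ f x - ρ * σ * (min 1 (Real.sqrt t) * ‖v‖ ^ 2) := by
      have : 0 ≤ ρ * min 1 (Real.sqrt t) := by positivity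
      nlinarith
    _ ≤ f x - ρ * σ * min ((3 * σ * (1 - 2 * ρ) / LH) ^ 2) (‖v‖ ^ 2) := by
      rw [hct]; gcongr
end

section
/- Let f : ℝ^d → ℝ be twice continuously differentiable with L_H-Lipschitz continuous Hessian. Let x ∈ ℝ^d, g = ∇f(x), H = ∇²f(x), and suppose d ∈ ℝ^d is a unit vector (‖d‖ = 1) with ⟨d, g⟩ ≤ 0 and ⟨d, Hd⟩ ≤ −ε_H/2 for some ε_H > 0. Let 0 < ρ < 1. Then every step-size α with 0 < α ≤ 3(1 − ρ)ε_H/(2L_H) satisfies f(x + αd) ≤ f(x) + (ρα²/2)⟨d, Hd⟩; consequently, with α* = 3(1 − ρ)ε_H/(2L_H), one has f(x + α*d) ≤ f(x) − (9ρ(1 − ρ)²/(16L_H²))·ε_H³. -/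
open scoped RealInnerProductSpace

/-!
Along the ray `t ↦ x + t • v` the Lipschitz Hessian gives, by integrating the bound
`⟪v, ∇²f (x + t • v) v⟫ ≤ ⟪v, ∇²f x v⟫ + L_H t` twice, the cubic upper model
`f (x + t • v) ≤ f x + t ⟪v, ∇f x⟫ + t² / 2 ⟪v, ∇²f x v⟫ + L_H t³ / 6`.
The linear term is nonpositive, and as long as `t ≤ 3 (1 - ρ) ε_H / (2 L_H)` the cubic term is at
most the fraction `1 - ρ` of `-t² / 2 ⟪v, ∇²f x v⟫ ≥ t² ε_H / 4`; at the largest such `t` the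
remaining decrease is `9 ρ (1 - ρ)² ε_H³ / (16 L_H²)`.
-/

open Set

theorem image_le_of_hasDerivAt_le {f f' B B' : ℝ → ℝ} {a b : ℝ} (hab : a ≤ b)
    (hf : ∀ t, HasDerivAt f (f' t) t) (hB : ∀ t, HasDerivAt B (B' t) t) (ha : f a ≤ B a)
    (bound : ∀ t ∈ Ico a b, f' t ≤ B' t) : f b ≤ B b :=
  image_le_of_deriv_right_le_deriv_boundary
    (fun t _ => (hf t).continuousAt.continuousWithinAt) (fun t _ => (hf t).hasDerivWithinAt) ha
    (fun t _ => (hB t).continuousAt.continuousWithinAt) (fun t _ => (hB t).hasDerivWithinAt)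
    bound ⟨hab, le_rfl⟩

theorem le_taylor_add_cube_of_deriv2_le {g g' g'' : ℝ → ℝ} {L α : ℝ} (hα : 0 ≤ α)
    (hg : ∀ t, HasDerivAt g (g' t) t) (hg' : ∀ t, HasDerivAt g' (g'' t) t)
    (hL : ∀ t ∈ Ico 0 α, g'' t ≤ g'' 0 + L * t) :
    g α ≤ g 0 + α * g' 0 + α ^ 2 / 2 * g'' 0 + L * α ^ 3 / 6 := by
  have hquad : ∀ t, HasDerivAt (fun t => g' 0 + t * g'' 0 + L * t ^ 2 / 2)
      (g'' 0 + L * t) t := fun t =>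
    ((((hasDerivAt_id' t).mul_const (g'' 0)).const_add (g' 0)).fun_add
      (((hasDerivAt_pow 2 t).const_mul L).div_const 2)).congr_deriv (by norm_num; ring)
  have hcubic : ∀ t, HasDerivAt (fun t => g 0 + t * g' 0 + t ^ 2 / 2 * g'' 0 + L * t ^ 3 / 6)
      (g' 0 + t * g'' 0 + L * t ^ 2 / 2) t := fun t =>
    (((((hasDerivAt_id' t).mul_const (g' 0)).const_add (g 0)).fun_add
      (((hasDerivAt_pow 2 t).div_const 2).mul_const (g'' 0))).fun_add
      (((hasDerivAt_pow 3 t).const_mul L).div_const 6)).congr_deriv (by norm_num; ring)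
  have hg'_le : ∀ t ∈ Ico 0 α, g' t ≤ g' 0 + t * g'' 0 + L * t ^ 2 / 2 := fun t ht =>
    image_le_of_hasDerivAt_le ht.1 hg' hquad (by simp)
      fun s hs => hL s ⟨hs.1, hs.2.trans ht.2⟩
  simpa using image_le_of_hasDerivAt_le hα hg hcubic (by simp) hg'_le

theorem DifferentiableAt.hasDerivAt_comp_add_smul {E F : Type*} [NormedAddCommGroup E]
    [NormedSpace ℝ E] [NormedAddCommGroup F] [NormedSpace ℝ F] {G : E → F} {x v : E} {t : ℝ}
    (hG : DifferentiableAt ℝ G (x + t • v)) :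
    HasDerivAt (fun s : ℝ => G (x + s • v)) (fderiv ℝ G (x + t • v) v) t := by
  have h := hG.hasFDerivAt.comp_hasDerivAt t (((hasDerivAt_id t).smul_const v).const_add x)
  rwa [one_smul] at h

variable {E : Type*} [NormedAddCommGroup E] [InnerProductSpace ℝ E] [CompleteSpace E]

theorem ContDiff.gradient {n : WithTop ℕ∞} {f : E → ℝ} (hf : ContDiff ℝ (n + 1) f) :
    ContDiff ℝ n (gradient f) :=
  (InnerProductSpace.toDual ℝ E).symm.toContinuousLinearEquiv.contDiff.comp
    (hf.fderiv_right le_rfl)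

theorem map_add_smul_le_of_fderiv_gradient_lipschitz {f : E → ℝ} {L : ℝ}
    (hf : Differentiable ℝ f) (hgrad : Differentiable ℝ (gradient f)) (x v : E)
    (hLip : ∀ y, ‖fderiv ℝ (gradient f) y - fderiv ℝ (gradient f) x‖ ≤ L * ‖y - x‖)
    {t : ℝ} (ht : 0 ≤ t) :
    f (x + t • v) ≤ f x + t * ⟪v, gradient f x⟫ + t ^ 2 / 2 * ⟪v, fderiv ℝ (gradient f) x v⟫ +
      L * ‖v‖ ^ 3 * t ^ 3 / 6 := by
  have hg : ∀ s : ℝ, HasDerivAt (fun s => f (x + s • v)) ⟪v, gradient f (x + s • v)⟫ s :=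
    fun s => by
      have h := (hf (x + s • v)).hasDerivAt_comp_add_smul
      rwa [← inner_gradient_left, real_inner_comm] at h
  have hg' : ∀ s : ℝ, HasDerivAt (fun s => ⟪v, gradient f (x + s • v)⟫)
      ⟪v, fderiv ℝ (gradient f) (x + s • v) v⟫ s :=
    fun s => by simpa using (hasDerivAt_const s v).inner ℝ (hgrad _).hasDerivAt_comp_add_smul
  have hg'' : ∀ s ∈ Ico 0 t, ⟪v, fderiv ℝ (gradient f) (x + s • v) v⟫ ≤
      ⟪v, fderiv ℝ (gradient f) (x + (0 : ℝ) • v) v⟫ + L * ‖v‖ ^ 3 * s := by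
    intro s hs
    rw [zero_smul, add_zero, ← sub_le_iff_le_add', ← inner_sub_right, ← sub_apply]
    calc _ ≤ ‖v‖ * ‖(fderiv ℝ (gradient f) (x + s • v) - fderiv ℝ (gradient f) x) v‖ :=
          real_inner_le_norm _ _
      _ ≤ ‖v‖ * (L * ‖(x + s • v) - x‖ * ‖v‖) := by
          gcongr
          exact (ContinuousLinearMap.le_opNorm _ _).trans (by gcongr; exact hLip _)
      _ = L * ‖v‖ ^ 3 * s := by
          rw [add_sub_cancel_left, norm_smul, Real.norm_of_nonneg hs.1]; ring
  simpa using le_taylor_add_cube_of_deriv2_le ht hg hg' hg''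

/-- Line-search guarantee and worst-case decrease for a unit direction of sufficiently
negative curvature. -/
theorem negative_curvature_decrease {d : ℕ} (f : EuclideanSpace ℝ (Fin d) → ℝ)
    (LH ρ εH : ℝ) (hLH : 0 < LH) (hρ0 : 0 < ρ) (hρ1 : ρ < 1) (hεH : 0 < εH)
    (hf : ContDiff ℝ 2 f)
    (hLip : ∀ x y : EuclideanSpace ℝ (Fin d), ‖hessian f x - hessian f y‖ ≤ LH * ‖x - y‖)
    (x v : EuclideanSpace ℝ (Fin d)) (hunit : ‖v‖ = 1)
    (hdg : ⟪v, gradient f x⟫ ≤ 0)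
    (hcurv : ⟪v, hessian f x v⟫ ≤ -εH / 2) :
    (∀ α : ℝ, 0 < α → α ≤ 3 * (1 - ρ) * εH / (2 * LH) →
      f (x + α • v) ≤ f x + ρ * α ^ 2 / 2 * ⟪v, hessian f x v⟫) ∧
    f (x + (3 * (1 - ρ) * εH / (2 * LH)) • v) ≤
      f x - 9 * ρ * (1 - ρ) ^ 2 / (16 * LH ^ 2) * εH ^ 3 := by
  set Q := ⟪v, hessian f x v⟫
  have hgrad : Differentiable ℝ (gradient f) :=
    (ContDiff.gradient (n := 1) hf).differentiable one_ne_zero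
  have hdecrease : ∀ α : ℝ, 0 < α → α ≤ 3 * (1 - ρ) * εH / (2 * LH) →
      f (x + α • v) ≤ f x + ρ * α ^ 2 / 2 * Q := by
    intro α hα hαle
    have hcubic :
        f (x + α • v) ≤ f x + α * ⟪v, gradient f x⟫ + α ^ 2 / 2 * Q + LH * α ^ 3 / 6 := by
      have h := map_add_smul_le_of_fderiv_gradient_lipschitz
        (hf.differentiable two_ne_zero) hgrad x v (fun y => hLip y x) hα.le
      rwa [hunit, one_pow, mul_one] at h
    have hLα : α * (2 * LH) ≤ 3 * (1 - ρ) * εH := (le_div_iff₀ (by positivity)).1 hαle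
    have hcube : LH * α ^ 3 / 6 ≤ -(1 - ρ) * α ^ 2 / 2 * Q := by
      nlinarith [mul_le_mul_of_nonneg_left hLα (sq_nonneg α), mul_le_mul_of_nonneg_left hcurv
        (mul_nonneg (sub_nonneg.2 hρ1.le) (sq_nonneg α))]
    nlinarith [mul_nonpos_of_nonneg_of_nonpos hα.le hdg]
  refine ⟨hdecrease, ?_⟩
  have hα : 0 < 3 * (1 - ρ) * εH / (2 * LH) := by have := sub_pos.2 hρ1; positivity
  calc f (x + (3 * (1 - ρ) * εH / (2 * LH)) • v)
      ≤ f x + ρ * (3 * (1 - ρ) * εH / (2 * LH)) ^ 2 / 2 * Q := hdecrease _ hα le_rfl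
    _ ≤ f x + ρ * (3 * (1 - ρ) * εH / (2 * LH)) ^ 2 / 2 * (-εH / 2) := by gcongr
    _ = f x - 9 * ρ * (1 - ρ) ^ 2 / (16 * LH ^ 2) * εH ^ 3 := by field_simp; ring
end
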